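/- If P is a Horn program and G = (I, E, λ) is an explanation for a model I of P, then for every atom p ∈ I, the proof π_G(p) induced by G is a valid Modus Ponens derivation of p from the rules of P; in particular, p is true in every classical model of P. -/
import Mathlib


/-- A labelled rule: `label : head ← pbody ∧ ¬ nbody ∧ ¬¬ nnbody`. -/
structure LRule (At L : Type) where
  label : L
  head : Finset At
  pbody : Finset At
  nbody : Finset At
  nnbody : Finset At

variable {At L : Type}

/-- `I` satisfies the negative part of the body of `r`. -/
def satNBody (I : Set At) (r : LRule At L) : Prop :=
  (∀ s ∈ r.nbody, s ∉ I) ∧ (∀ t ∈ r.nnbody, t ∈ I)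

/-- `I` satisfies the (full) body of `r`. -/
def satBody (I : Set At) (r : LRule At L) : Prop :=
  (∀ q ∈ r.pbody, q ∈ I) ∧ satNBody I r

/-- Classical satisfaction of a rule. -/
def satRule (I : Set At) (r : LRule At L) : Prop :=
  satBody I r → ∃ p ∈ r.head, p ∈ I

/-- `I` is a classical model of the program `P`. -/
def IsModel (I : Set At) (P : Set (LRule At L)) : Prop := ∀ r ∈ P, satRule I r

/-- A labelled program has pairwise distinct labels. -/
def IsProgram (P : Set (LRule At L)) : Prop :=
  ∀ r ∈ P, ∀ r' ∈ P, r.label = r'.label → r = r'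

/-- The positive part of a rule (keeping its label). -/
def reductRule (r : LRule At L) : LRule At L :=
  { r with nbody := ∅, nnbody := ∅ }

/-- The reduct `P^I` of a set of labelled rules. -/
def reduct (P : Set (LRule At L)) (I : Set At) : Set (LRule At L) :=
  { r' | ∃ r ∈ P, satNBody I r ∧ r' = reductRule r }

/-- The rules of `P` supporting atom `p` under `I`. -/
def SupRules (I : Set At) (P : Set (LRule At L)) (p : At) : Set (LRule At L) :=
  { r | r ∈ P ∧ p ∈ r.head ∧ satBody I r }

/-- `(E, lab)` is a support graph of `I` under `P`: vertices are the atoms of `I`,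
`lab` injectively labels each atom of `I` with the label of a rule supporting it
whose positive body atoms are exactly its in-neighbours. -/
def IsSupportGraph (I : Set At) (P : Set (LRule At L))
    (E : At → At → Prop) (lab : At → L) : Prop :=
  (∀ p q, E p q → p ∈ I ∧ q ∈ I) ∧
  Set.InjOn lab I ∧
  (∀ p ∈ I, ∃ r ∈ P, r.label = lab p ∧ p ∈ r.head ∧ satBody I r ∧
    (∀ q, E q p ↔ q ∈ r.pbody))

/-- An explanation is an acyclic (well-founded) support graph. -/
def IsExplanation (I : Set At) (P : Set (LRule At L))
    (E : At → At → Prop) (lab : At → L) : Prop :=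
  IsSupportGraph I P E lab ∧ WellFounded E

/-- A supported model: a classical model admitting a support graph. -/
def IsSupportedModel (I : Set At) (P : Set (LRule At L)) : Prop :=
  IsModel I P ∧ ∃ E lab, IsSupportGraph I P E lab

/-- A justified model: a classical model admitting an explanation. -/
def IsJustifiedModel (I : Set At) (P : Set (LRule At L)) : Prop :=
  IsModel I P ∧ ∃ E lab, IsExplanation I P E lab

/-- A stable model: a minimal classical model of the reduct `P^I`. -/
def IsStableModel (I : Set At) (P : Set (LRule At L)) : Prop :=
  IsModel I (reduct P I) ∧ ∀ J ⊆ I, IsModel J (reduct P I) → J = I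

/-- A Horn program: at most one head atom and no (double) negation. -/
def IsHorn (P : Set (LRule At L)) : Prop :=
  ∀ r ∈ P, r.head.card ≤ 1 ∧ r.nbody = ∅ ∧ r.nnbody = ∅

/-- Modus Ponens derivability of an atom from the rules of a program. -/
inductive MPDeriv {At L : Type} (P : Set (LRule At L)) : At → Prop
  | step (r : LRule At L) (p : At) (hr : r ∈ P) (hp : p ∈ r.head)
      (hb : ∀ q ∈ r.pbody, MPDeriv P q) : MPDeriv P p

theorem explanation_gives_MP_proofs (I : Set At) (P : Set (LRule At L))
    (hP : IsProgram P) (hHorn : IsHorn P) (hI : IsModel I P)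
    (E : At → At → Prop) (lab : At → L) (hexp : IsExplanation I P E lab) :
    ∀ p ∈ I, MPDeriv P p ∧ ∀ J : Set At, IsModel J P → p ∈ J := by
  obtain ⟨⟨hE, hinj, hsup⟩, hwf⟩ := hexp
  have key : ∀ p, p ∈ I → MPDeriv P p := by
    intro p
    induction p using hwf.induction with
    | _ p ih =>
      intro hpI
      obtain ⟨r, hrP, hlab, hph, hb, hedge⟩ := hsup p hpI
      exact MPDeriv.step r p hrP hph (fun q hq =>
        ih q ((hedge q).mpr hq) (hE q p ((hedge q).mpr hq)).1)
  intro p hpI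
  refine ⟨key p hpI, ?_⟩
  have : ∀ q, MPDeriv P q → ∀ J : Set At, IsModel J P → q ∈ J := by
    intro q hq
    induction hq with
    | step r p hr hp hb ihb =>
      intro J hJ
      obtain ⟨hc, hn, hnn⟩ := hHorn r hr
      obtain ⟨p', hp', hpJ⟩ := hJ r hr ⟨fun q hq => ihb q hq J hJ,
        by simp [satNBody, hn, hnn]⟩
      have : p' = p := Finset.card_le_one.mp hc p' hp' p hp
      exact this ▸ hpJ
  exact this p (key p hpI)
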